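/- arXiv:1108.3401 — 5 statements merged into one kernel-verified Lean document; each statement's English description precedes it below -/
import Mathlib

section
/- Let $\theta_0,\theta_x,\theta_1,\theta_\infty \in \mathbb{C}$ and set $p_\mu = 2\cos\pi\theta_\mu$ for $\mu \in \{0,x,1,\infty\}$. Suppose $p_{0x} = 2\cos\pi(\theta_\infty - \theta_1)$. Then for all $p_{01}, p_{x1} \in \mathbb{C}$, the Jimbo–Fricke cubic expression $p_{0x}^2+p_{01}^2+p_{x1}^2+p_{0x}p_{01}p_{x1}-(p_0p_x+p_1p_\infty)p_{0x}-(p_0p_1+p_xp_\infty)p_{01}-(p_xp_1+p_0p_\infty)p_{x1}+p_0^2+p_1^2+p_x^2+p_\infty^2+p_0p_xp_1p_\infty-4$ factors as $\big[p_{01}+p_{x1}e^{i\pi(\theta_\infty-\theta_1)}-2(e^{-i\pi\theta_1}\cos\pi\theta_0+e^{i\pi\theta_\infty}\cos\pi\theta_x)\big]\cdot\big[p_{01}+p_{x1}e^{-i\pi(\theta_\infty-\theta_1)}-2(e^{i\pi\theta_1}\cos\pi\theta_0+e^{-i\pi\theta_\infty}\cos\pi\theta_x)\big]$. -/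
open Complex

set_option maxHeartbeats 1000000 in
/-- Factorization of the Jimbo–Fricke cubic when `p₀ₓ = 2 cos π(θ∞ − θ₁)`. -/
theorem jimbo_fricke_factorization_sub (θ0 θx θ1 θinf : ℂ)
    (p0 px p1 pinf : ℂ)
    (hp0 : p0 = 2 * Complex.cos ((Real.pi : ℂ) * θ0))
    (hpx : px = 2 * Complex.cos ((Real.pi : ℂ) * θx))
    (hp1 : p1 = 2 * Complex.cos ((Real.pi : ℂ) * θ1))
    (hpinf : pinf = 2 * Complex.cos ((Real.pi : ℂ) * θinf))
    (p0x : ℂ) (hp0x : p0x = 2 * Complex.cos ((Real.pi : ℂ) * (θinf - θ1))) :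
    ∀ p01 px1 : ℂ,
      p0x ^ 2 + p01 ^ 2 + px1 ^ 2 + p0x * p01 * px1
        - (p0 * px + p1 * pinf) * p0x - (p0 * p1 + px * pinf) * p01
        - (px * p1 + p0 * pinf) * px1
        + p0 ^ 2 + p1 ^ 2 + px ^ 2 + pinf ^ 2 + p0 * px * p1 * pinf - 4
      = (p01 + px1 * Complex.exp (Complex.I * (Real.pi : ℂ) * (θinf - θ1))
            - 2 * (Complex.exp (-Complex.I * (Real.pi : ℂ) * θ1)
                    * Complex.cos ((Real.pi : ℂ) * θ0)
                  + Complex.exp (Complex.I * (Real.pi : ℂ) * θinf)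
                    * Complex.cos ((Real.pi : ℂ) * θx)))
        * (p01 + px1 * Complex.exp (-Complex.I * (Real.pi : ℂ) * (θinf - θ1))
            - 2 * (Complex.exp (Complex.I * (Real.pi : ℂ) * θ1)
                    * Complex.cos ((Real.pi : ℂ) * θ0)
                  + Complex.exp (-Complex.I * (Real.pi : ℂ) * θinf)
                    * Complex.cos ((Real.pi : ℂ) * θx))) := by
  intro p01 px1
  have hcos : ∀ z : ℂ, Complex.cos z
      = (Complex.exp (Complex.I * z) + Complex.exp (-(Complex.I * z))) / 2 := by
    intro z; rw [Complex.cos]; ring_nf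
  have e1 : Complex.exp (Complex.I * (Real.pi : ℂ) * (θinf - θ1))
      = Complex.exp (Complex.I * ((Real.pi : ℂ) * θinf))
        * Complex.exp (-(Complex.I * ((Real.pi : ℂ) * θ1))) := by
    rw [← Complex.exp_add]; congr 1; ring
  have e2 : Complex.exp (-Complex.I * (Real.pi : ℂ) * (θinf - θ1))
      = Complex.exp (-(Complex.I * ((Real.pi : ℂ) * θinf)))
        * Complex.exp (Complex.I * ((Real.pi : ℂ) * θ1)) := by
    rw [← Complex.exp_add]; congr 1; ring
  have e3 : Complex.exp (-Complex.I * (Real.pi : ℂ) * θ1)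
      = Complex.exp (-(Complex.I * ((Real.pi : ℂ) * θ1))) := by congr 1; ring
  have e4 : Complex.exp (-Complex.I * (Real.pi : ℂ) * θinf)
      = Complex.exp (-(Complex.I * ((Real.pi : ℂ) * θinf))) := by congr 1; ring
  have e5 : Complex.exp (Complex.I * ((Real.pi : ℂ) * (θinf - θ1)))
      = Complex.exp (Complex.I * ((Real.pi : ℂ) * θinf))
        * Complex.exp (-(Complex.I * ((Real.pi : ℂ) * θ1))) := by
    rw [← Complex.exp_add]; congr 1; ring
  have e5' : Complex.exp (-(Complex.I * ((Real.pi : ℂ) * (θinf - θ1))))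
      = Complex.exp (-(Complex.I * ((Real.pi : ℂ) * θinf)))
        * Complex.exp (Complex.I * ((Real.pi : ℂ) * θ1)) := by
    rw [← Complex.exp_add]; congr 1; ring
  have e6 : Complex.exp (Complex.I * (Real.pi : ℂ) * θinf)
      = Complex.exp (Complex.I * ((Real.pi : ℂ) * θinf)) := by congr 1; ring
  have e7 : Complex.exp (Complex.I * (Real.pi : ℂ) * θ1)
      = Complex.exp (Complex.I * ((Real.pi : ℂ) * θ1)) := by congr 1; ring
  subst hp0 hpx hp1 hpinf hp0x
  simp only [hcos, e1, e2, e3, e4, e5, e5', e6, e7]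
  set a := Complex.exp (Complex.I * ((Real.pi : ℂ) * θ0)) with ha
  set a' := Complex.exp (-(Complex.I * ((Real.pi : ℂ) * θ0))) with ha'
  set b := Complex.exp (Complex.I * ((Real.pi : ℂ) * θx)) with hb
  set b' := Complex.exp (-(Complex.I * ((Real.pi : ℂ) * θx))) with hb'
  set c := Complex.exp (Complex.I * ((Real.pi : ℂ) * θ1)) with hc
  set c' := Complex.exp (-(Complex.I * ((Real.pi : ℂ) * θ1))) with hc'
  set d := Complex.exp (Complex.I * ((Real.pi : ℂ) * θinf)) with hd
  set d' := Complex.exp (-(Complex.I * ((Real.pi : ℂ) * θinf))) with hd'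
  have hpa : a * a' = 1 := by rw [ha, ha', ← Complex.exp_add]; simp
  have hpb : b * b' = 1 := by rw [hb, hb', ← Complex.exp_add]; simp
  have hpc : c * c' = 1 := by rw [hc, hc', ← Complex.exp_add]; simp
  have hpd : d * d' = 1 := by rw [hd, hd', ← Complex.exp_add]; simp
  linear_combination (2 - 2 * c * c') * hpa + (2 - 2 * d * d') * hpb
    + (-d' ^ 2 - d * d' * px1 ^ 2 - d ^ 2 + a' * d' * px1 + a' * d * px1
        - a' ^ 2 + a * d' * px1 + a * d * px1 - a ^ 2) * hpc
    + (-px1 ^ 2 - c' ^ 2 - c ^ 2 + b' * c' * px1 + b' * c * px1 - b' ^ 2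
        + b * c' * px1 + b * c * px1 - b ^ 2) * hpd
end

section
/- Let $M_0, M_x \in SL(2,\mathbb{C})$ with $\mathrm{tr}(M_0) = 2\cos\pi\theta_0$ and $\mathrm{tr}(M_x) = 2\cos\pi\theta_x$. If $\mathrm{tr}(M_x M_0) \neq 2\cos\pi(\theta_0+\theta_x)$ and $\mathrm{tr}(M_x M_0) \neq 2\cos\pi(\theta_0-\theta_x)$, then $M_0$ and $M_x$ have no common eigenvector, i.e., the group generated by $M_0$ and $M_x$ is irreducible. -/
open Complex

lemma two_cos_eq (z : ℂ) :
    2 * Complex.cos z = Complex.exp (z * I) + (Complex.exp (z * I))⁻¹ := by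
  rw [Complex.cos, ← Complex.exp_neg]
  ring

lemma eig_quad (M : Matrix (Fin 2) (Fin 2) ℂ) (v : Fin 2 → ℂ) (hv : v ≠ 0) (μ : ℂ)
    (h : M.mulVec v = μ • v) : μ ^ 2 - M.trace * μ + M.det = 0 := by
  set A : Matrix (Fin 2) (Fin 2) ℂ := μ • (1 : Matrix (Fin 2) (Fin 2) ℂ) - M with hA
  have hAv : A.mulVec v = 0 := by
    simp [hA, Matrix.sub_mulVec, Matrix.smul_mulVec, h]
  have hdet : A.det = 0 := by
    by_contra hd
    exact hv (Matrix.eq_zero_of_mulVec_eq_zero hd hAv)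
  have : A.det = μ ^ 2 - M.trace * μ + M.det := by
    rw [Matrix.det_fin_two, Matrix.det_fin_two, Matrix.trace_fin_two]
    simp [hA, Matrix.one_apply]
    ring
  rw [this] at hdet
  exact hdet

lemma quad_factor {t μ a : ℂ} (ha : a ≠ 0) (htr : t = a + a⁻¹)
    (h : μ ^ 2 - t * μ + 1 = 0) : μ = a ∨ μ = a⁻¹ := by
  have : (μ - a) * (μ - a⁻¹) = 0 := by
    rw [htr] at h
    linear_combination h + mul_inv_cancel₀ ha
  rcases mul_eq_zero.1 this with h' | h'
  · left; exact sub_eq_zero.1 h'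
  · right; exact sub_eq_zero.1 h'

/-- If `tr(Mₓ M₀)` differs from both `2 cos π(θ₀ + θₓ)` and `2 cos π(θ₀ − θₓ)`,
then `M₀` and `Mₓ` have no common eigenvector (irreducibility). -/
theorem no_common_eigenvector_of_trace_ne (M0 Mx : Matrix (Fin 2) (Fin 2) ℂ)
    (h0 : M0.det = 1) (hx : Mx.det = 1) (θ0 θx : ℂ)
    (ht0 : M0.trace = 2 * Complex.cos ((Real.pi : ℂ) * θ0))
    (htx : Mx.trace = 2 * Complex.cos ((Real.pi : ℂ) * θx))
    (hne1 : (Mx * M0).trace ≠ 2 * Complex.cos ((Real.pi : ℂ) * (θ0 + θx)))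
    (hne2 : (Mx * M0).trace ≠ 2 * Complex.cos ((Real.pi : ℂ) * (θ0 - θx))) :
    ¬ ∃ v : Fin 2 → ℂ, v ≠ 0 ∧
      (∃ μ0 : ℂ, M0.mulVec v = μ0 • v) ∧ (∃ μx : ℂ, Mx.mulVec v = μx • v) := by
  rintro ⟨v, hv, ⟨μ0, hμ0⟩, ⟨μx, hμx⟩⟩
  set a : ℂ := Complex.exp ((Real.pi : ℂ) * θ0 * I) with ha
  set b : ℂ := Complex.exp ((Real.pi : ℂ) * θx * I) with hb
  have ha0 : a ≠ 0 := Complex.exp_ne_zero _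
  have hb0 : b ≠ 0 := Complex.exp_ne_zero _
  have q0 : μ0 ^ 2 - M0.trace * μ0 + 1 = 0 := by
    have := eig_quad M0 v hv μ0 hμ0; rwa [h0] at this
  have qx : μx ^ 2 - Mx.trace * μx + 1 = 0 := by
    have := eig_quad Mx v hv μx hμx; rwa [hx] at this
  have hc0 : μ0 = a ∨ μ0 = a⁻¹ :=
    quad_factor ha0 (by rw [ht0, two_cos_eq]) q0
  have hcx : μx = b ∨ μx = b⁻¹ :=
    quad_factor hb0 (by rw [htx, two_cos_eq]) qx
  -- product eigenvalue
  have hprod : (Mx * M0).mulVec v = (μx * μ0) • v := by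
    rw [← Matrix.mulVec_mulVec, hμ0, Matrix.mulVec_smul, hμx, smul_smul, mul_comm μ0 μx]
  have qp : (μx * μ0) ^ 2 - (Mx * M0).trace * (μx * μ0) + 1 = 0 := by
    have := eig_quad (Mx * M0) v hv (μx * μ0) hprod
    rwa [Matrix.det_mul, hx, h0, one_mul] at this
  have hl0 : μx * μ0 ≠ 0 := by
    intro h
    rw [h] at qp; simp at qp
  have htr : (Mx * M0).trace = μx * μ0 + (μx * μ0)⁻¹ := by
    linear_combination (-(μx * μ0)⁻¹) * qp + (μx * μ0 - (Mx * M0).trace) * mul_inv_cancel₀ hl0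
  have hab : Complex.exp ((Real.pi : ℂ) * (θ0 + θx) * I) = a * b := by
    rw [ha, hb, ← Complex.exp_add]; ring_nf
  have hab' : Complex.exp ((Real.pi : ℂ) * (θ0 - θx) * I) = a * b⁻¹ := by
    rw [ha, hb, ← Complex.exp_neg, ← Complex.exp_add]; ring_nf
  have e1 : 2 * Complex.cos ((Real.pi : ℂ) * (θ0 + θx)) = a * b + (a * b)⁻¹ := by
    rw [two_cos_eq, hab]
  have e2 : 2 * Complex.cos ((Real.pi : ℂ) * (θ0 - θx)) = a * b⁻¹ + (a * b⁻¹)⁻¹ := by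
    rw [two_cos_eq, hab']
  rcases hc0 with h1 | h1 <;> rcases hcx with h2 | h2
  · exact hne1 (by rw [htr, h1, h2, e1]; field_simp; try ring)
  · exact hne2 (by rw [htr, h1, h2, e2]; field_simp; try ring)
  · exact hne2 (by rw [htr, h1, h2, e2]; field_simp; try ring)
  · exact hne1 (by rw [htr, h1, h2, e1]; field_simp; try ring)
end

section
/- Let $\alpha,\gamma \in \mathbb{C}$, let $a \in \mathbb{C}$ with $a \neq 0$ and $a \neq 1$, and let $y$ be a function holomorphic on an open disc around $0$ such that $y(0) = 0$, $y'(0) = a$, and $y$ solves the sixth Painlevé equation $\mathrm{PVI}_{\alpha,0,\gamma,1/2}$ (i.e., with $\beta = 0$ and $\delta = \tfrac12$) for all $x \neq 0$ in a punctured neighbourhood of $0$. Then $y''(0) = 2\,a(a-1)\left(\gamma - \alpha - \tfrac12\right)$. -/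
set_option maxHeartbeats 2000000
open Filter Topology Metric

private lemma analyticAt_deriv' {f : ℂ → ℂ} {z : ℂ} (h : AnalyticAt ℂ f z) :
    AnalyticAt ℂ (deriv f) z := by
  obtain ⟨s, hs, hfs⟩ := h.eventually_analyticAt.exists_mem
  exact (AnalyticOnNhd.deriv (fun w hw => hfs w hw)) z (mem_of_mem_nhds hs)

/-- `y` satisfies the sixth Painlevé equation with parameters `α β γ δ` at the point `x`. -/
def SatisfiesPVI (α β γ δ : ℂ) (y : ℂ → ℂ) (x : ℂ) : Prop :=
  deriv (deriv y) x =
    (1/2) * (1 / y x + 1 / (y x - 1) + 1 / (y x - x)) * (deriv y x) ^ 2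
    - (1 / x + 1 / (x - 1) + 1 / (y x - x)) * deriv y x
    + (y x * (y x - 1) * (y x - x)) / (x ^ 2 * (x - 1) ^ 2) *
      (α + β * x / (y x) ^ 2 + γ * (x - 1) / (y x - 1) ^ 2
        + δ * (x * (x - 1)) / (y x - x) ^ 2)

private lemma pvi_aux_identity (α γ x u v : ℂ) (hx : x ≠ 0) (hx1 : x - 1 ≠ 0) (hu : u ≠ 0)
    (hu1 : u - 1 ≠ 0) (hxu1 : x * u - 1 ≠ 0) (hyx : x * u - x ≠ 0)
    (hM : 2 * u * (u - 1) * (x - 1) ^ 2 * (x * u - 1) ^ 2 ≠ 0) :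
    (1/2) * (1 / (x*u) + 1 / (x*u - 1) + 1 / (x*u - x)) * v ^ 2
    - (1 / x + 1 / (x - 1) + 1 / (x*u - x)) * v
    + ((x*u) * (x*u - 1) * (x*u - x)) / (x ^ 2 * (x - 1) ^ 2) *
      (α + 0 * x / (x*u) ^ 2 + γ * (x - 1) / (x*u - 1) ^ 2
        + (1/2) * (x * (x - 1)) / (x*u - x) ^ 2)
    = ((x - 1) ^ 2 * (x * u - 1) ^ 2 * (2 * u - 1) * v ^ 2 -
            2 * u ^ 2 * v * (x - 1) ^ 2 * (x * u - 1) ^ 2 +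
          u ^ 2 * (x - 1) * (x * u - 1) ^ 3 +
        x * v ^ 2 * u * (u - 1) * (x - 1) ^ 2 * (x * u - 1) -
        2 * x * v * u * (u - 1) * (x - 1) * (x * u - 1) ^ 2 +
        2 * α * x * u ^ 2 * (u - 1) ^ 2 * (x * u - 1) ^ 3 +
        2 * γ * x * u ^ 2 * (u - 1) ^ 2 * (x - 1) * (x * u - 1)) /
      (2 * u * (u - 1) * (x - 1) ^ 2 * (x * u - 1) ^ 2) / x := by
  have e : x * u - x = x * (u - 1) := by ring
  rw [div_div, eq_div_iff (mul_ne_zero hM hx), e]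
  have hxu : x * u ≠ 0 := mul_ne_zero hx hu
  have hxu1' : x * (u - 1) ≠ 0 := mul_ne_zero hx hu1
  field_simp [hx, hx1, hu, hu1, hxu1, hxu, hxu1']
  ring

/-- For a solution of `PVI(α, 0, γ, 1/2)` holomorphic at the critical point `0`
with `y(0) = 0` and `y'(0) = a` (`a ≠ 0, 1`), the second derivative at `0` is
`2 a (a − 1)(γ − α − 1/2)`. -/
theorem pvi_taylor_second_coefficient (α γ a : ℂ) (ha0 : a ≠ 0) (ha1 : a ≠ 1)
    (r : ℝ) (hr : 0 < r) (y : ℂ → ℂ)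
    (hy : DifferentiableOn ℂ y (Metric.ball (0 : ℂ) r))
    (hy0 : y 0 = 0) (hy1 : deriv y 0 = a)
    (hsol : ∀ x ∈ Metric.ball (0 : ℂ) r, x ≠ 0 → SatisfiesPVI α 0 γ (1/2) y x) :
    deriv (deriv y) 0 = 2 * a * (a - 1) * (γ - α - 1/2) := by
  have ha1' : a - 1 ≠ 0 := sub_ne_zero.mpr ha1
  have h0mem : (0:ℂ) ∈ Metric.ball (0:ℂ) r := by simpa using hr
  have hA : AnalyticAt ℂ y 0 := hy.analyticAt (Metric.isOpen_ball.mem_nhds h0mem)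
  have hgA : AnalyticAt ℂ (dslope y 0) 0 := by
    obtain ⟨P, hP⟩ := hA
    exact (hP.has_fpower_series_dslope_fslope).analyticAt
  set g : ℂ → ℂ := dslope y 0 with hgdef
  have hg0 : g 0 = a := by rw [hgdef, dslope_same, hy1]
  have hyg : ∀ z : ℂ, y z = z * g z := by
    intro z
    have h := sub_smul_dslope y 0 z
    rw [hy0, sub_zero, sub_zero, smul_eq_mul] at h
    exact h.symm
  have hdgA : AnalyticAt ℂ (deriv g) 0 := analyticAt_deriv' hgA
  obtain ⟨b, hb⟩ : ∃ c, deriv g 0 = c := ⟨_, rfl⟩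
  have hg' : HasDerivAt g b 0 := hb ▸ hgA.differentiableAt.hasDerivAt
  have hdg' : HasDerivAt (deriv g) (deriv (deriv g) 0) 0 :=
    hdgA.differentiableAt.hasDerivAt
  have hdy : deriv y =ᶠ[𝓝 (0:ℂ)] fun z => g z + z * deriv g z := by
    filter_upwards [hgA.eventually_analyticAt] with z hz
    have h1 : HasDerivAt (fun w => w * g w) (1 * g z + z * deriv g z) z :=
      (hasDerivAt_id' z).mul hz.differentiableAt.hasDerivAt
    have h2 : HasDerivAt y (1 * g z + z * deriv g z) z :=
      h1.congr_of_eventuallyEq (Filter.Eventually.of_forall hyg)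
    rw [h2.deriv]; ring
  have hid : HasDerivAt (fun x : ℂ => x) 1 0 := hasDerivAt_id' 0
  have hv2 : HasDerivAt (fun z => g z + z * deriv g z) (2 * b) 0 := by
    have h := hg'.add (hid.mul hdg')
    refine h.congr_deriv ?_
    rw [hb]; ring
  have hy2 : deriv (deriv y) 0 = 2 * b := by rw [hdy.deriv_eq, hv2.deriv]
  have hy2A : AnalyticAt ℂ (deriv (deriv y)) 0 := analyticAt_deriv' (analyticAt_deriv' hA)
  have hx1 : HasDerivAt (fun x : ℂ => x - 1) 1 0 := hid.sub_const 1
  have hxg1 : HasDerivAt (fun x : ℂ => x * g x - 1) (1 * g 0 + 0 * b) 0 :=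
    (hid.mul hg').sub_const 1
  have hgm1 : HasDerivAt (fun x : ℂ => g x - 1) b 0 := hg'.sub_const 1
  have t1 := (((hx1.pow 2).mul (hxg1.pow 2)).mul ((hg'.const_mul (2:ℂ)).sub_const 1)).mul
    (hv2.pow 2)
  have t2 := ((((hg'.pow 2).const_mul (2:ℂ)).mul hv2).mul (hx1.pow 2)).mul (hxg1.pow 2)
  have t3 := ((hg'.pow 2).mul hx1).mul (hxg1.pow 3)
  have t4 := ((((hid.mul (hv2.pow 2)).mul hg').mul hgm1).mul (hx1.pow 2)).mul hxg1
  have t5 := (((((hid.const_mul (2:ℂ)).mul hv2).mul hg').mul hgm1).mul hx1).mul (hxg1.pow 2)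
  have t6 := (((hid.const_mul (2*α)).mul (hg'.pow 2)).mul (hgm1.pow 2)).mul (hxg1.pow 3)
  have t7 := ((((hid.const_mul (2*γ)).mul (hg'.pow 2)).mul (hgm1.pow 2)).mul hx1).mul hxg1
  have hN := (((((t1.sub t2).add t3).add t4).sub t5).add t6).add t7
  have hM := (((hg'.const_mul (2:ℂ)).mul hgm1).mul (hx1.pow 2)).mul (hxg1.pow 2)
  have hM0 : (2:ℂ) * g 0 * (g 0 - 1) * ((0:ℂ) - 1)^2 * ((0:ℂ) * g 0 - 1)^2 ≠ 0 := by
    rw [hg0]; simp [ha0, ha1']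
  have hτ := hN.div hM hM0
  have hslope := hasDerivAt_iff_tendsto_slope.mp hτ
  have hT : Tendsto (deriv (deriv y)) (𝓝[≠] (0:ℂ))
      (𝓝 (b + a/2 - a^2/2 + a*(a-1)*(γ-α))) := by
    have hF0 : (((0:ℂ) - 1) ^ 2 * ((0:ℂ) * g (0:ℂ) - 1) ^ 2 * (2 * g (0:ℂ) - 1) * (g (0:ℂ) + (0:ℂ) * deriv g (0:ℂ)) ^ 2 -
            2 * g (0:ℂ) ^ 2 * (g (0:ℂ) + (0:ℂ) * deriv g (0:ℂ)) * ((0:ℂ) - 1) ^ 2 * ((0:ℂ) * g (0:ℂ) - 1) ^ 2 +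
          g (0:ℂ) ^ 2 * ((0:ℂ) - 1) * ((0:ℂ) * g (0:ℂ) - 1) ^ 3 +
        (0:ℂ) * (g (0:ℂ) + (0:ℂ) * deriv g (0:ℂ)) ^ 2 * g (0:ℂ) * (g (0:ℂ) - 1) * ((0:ℂ) - 1) ^ 2 * ((0:ℂ) * g (0:ℂ) - 1) -
        2 * (0:ℂ) * (g (0:ℂ) + (0:ℂ) * deriv g (0:ℂ)) * g (0:ℂ) * (g (0:ℂ) - 1) * ((0:ℂ) - 1) * ((0:ℂ) * g (0:ℂ) - 1) ^ 2 +
        2 * α * (0:ℂ) * g (0:ℂ) ^ 2 * (g (0:ℂ) - 1) ^ 2 * ((0:ℂ) * g (0:ℂ) - 1) ^ 3 +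
        2 * γ * (0:ℂ) * g (0:ℂ) ^ 2 * (g (0:ℂ) - 1) ^ 2 * ((0:ℂ) - 1) * ((0:ℂ) * g (0:ℂ) - 1)) /
      (2 * g (0:ℂ) * (g (0:ℂ) - 1) * ((0:ℂ) - 1) ^ 2 * ((0:ℂ) * g (0:ℂ) - 1) ^ 2) = 0 := by
      rw [div_eq_zero_iff]
      exact Or.inl (by ring)
    have hval : Tendsto (slope (fun x : ℂ =>
      ((x - 1) ^ 2 * (x * g x - 1) ^ 2 * (2 * g x - 1) * (g x + x * deriv g x) ^ 2 -
            2 * g x ^ 2 * (g x + x * deriv g x) * (x - 1) ^ 2 * (x * g x - 1) ^ 2 +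
          g x ^ 2 * (x - 1) * (x * g x - 1) ^ 3 +
        x * (g x + x * deriv g x) ^ 2 * g x * (g x - 1) * (x - 1) ^ 2 * (x * g x - 1) -
        2 * x * (g x + x * deriv g x) * g x * (g x - 1) * (x - 1) * (x * g x - 1) ^ 2 +
        2 * α * x * g x ^ 2 * (g x - 1) ^ 2 * (x * g x - 1) ^ 3 +
        2 * γ * x * g x ^ 2 * (g x - 1) ^ 2 * (x - 1) * (x * g x - 1)) /
      (2 * g x * (g x - 1) * (x - 1) ^ 2 * (x * g x - 1) ^ 2)) 0) (𝓝[≠] (0:ℂ))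
        (𝓝 (b + a/2 - a^2/2 + a*(a-1)*(γ-α))) := by
      refine hslope.mono_right (congrArg nhds ?_).ge
      simp only [Pi.mul_apply, Pi.pow_apply, Pi.sub_apply, Pi.add_apply]
      rw [hg0]
      rw [eq_div_iff (by simp [ha0, ha1'] :
        ((2:ℂ) * a * (a - 1) * ((0:ℂ) - 1) ^ 2 * ((0:ℂ) * a - 1) ^ 2) ^ 2 ≠ 0)]
      push_cast
      ring
    refine hval.congr' ?_
    filter_upwards [self_mem_nhdsWithin,
      (Metric.isOpen_ball.eventually_mem h0mem).filter_mono nhdsWithin_le_nhds,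
      (hgA.continuousAt.eventually_ne (hg0 ▸ ha0)).filter_mono nhdsWithin_le_nhds,
      (hgA.continuousAt.eventually_ne (hg0 ▸ ha1)).filter_mono nhdsWithin_le_nhds,
      ((continuousAt_id.mul hgA.continuousAt).eventually_ne
        (by simp : (0:ℂ) * g 0 ≠ 1)).filter_mono nhdsWithin_le_nhds,
      (continuousAt_id.eventually_ne (by norm_num : (0:ℂ) ≠ 1)).filter_mono
        nhdsWithin_le_nhds,
      hdy.filter_mono nhdsWithin_le_nhds] with x hx0 hxb hgx0 hgx1 hxg1' hx1' hdyx
    have hx0' : x ≠ 0 := hx0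
    have hgx1' : g x - 1 ≠ 0 := sub_ne_zero.mpr hgx1
    have hxg1'' : x * g x - 1 ≠ 0 := sub_ne_zero.mpr hxg1'
    have hx1'' : x - 1 ≠ 0 := sub_ne_zero.mpr hx1'
    have hyx : x * g x - x ≠ 0 := by
      have h : x * g x - x = x * (g x - 1) := by ring
      rw [h]; exact mul_ne_zero hx0' hgx1'
    have hMx : 2 * g x * (g x - 1) * (x - 1) ^ 2 * (x * g x - 1) ^ 2 ≠ 0 :=
      mul_ne_zero (mul_ne_zero (mul_ne_zero (mul_ne_zero two_ne_zero hgx0) hgx1')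
        (pow_ne_zero _ hx1'')) (pow_ne_zero _ hxg1'')
    have heq := hsol x hxb hx0'
    unfold SatisfiesPVI at heq
    show slope _ 0 x = _
    rw [slope_def_field, heq, hyg x, hdyx, hF0, sub_zero, sub_zero]
    exact (pvi_aux_identity α γ x (g x) (g x + x * deriv g x)
      hx0' hx1'' hgx0 hgx1' hxg1'' hyx hMx).symm
  have hT2 : Tendsto (deriv (deriv y)) (𝓝[≠] (0:ℂ)) (𝓝 (deriv (deriv y) 0)) :=
    hy2A.continuousAt.continuousWithinAt.tendsto
  have huniq := tendsto_nhds_unique hT2 hT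
  rw [hy2] at huniq ⊢
  linear_combination 2 * huniq
end

section
/- Let $\theta_0,\theta_x,\theta_1,\theta_\infty \in \mathbb{C}$ satisfy $\theta_0 + \theta_x + \theta_1 + \theta_\infty = 0$ and $\theta_\infty \neq 1$. Let $U \subseteq \mathbb{C}\setminus\{0,1\}$ be open and let $u : U \to \mathbb{C}$ be a holomorphic, nowhere-vanishing solution of the hypergeometric equation $x(1-x)u'' + \big[(2 - \theta_\infty - \theta_1) - (4 - \theta_\infty + \theta_x)x\big]u' - (2-\theta_\infty)(1+\theta_x)u = 0$. Define $y(x) = \frac{\theta_1 + \theta_\infty - 1 + x(1+\theta_x)}{\theta_\infty - 1} - \frac{1}{\theta_\infty - 1}\,\frac{x(1-x)}{u(x)}\,u'(x)$, and suppose $y(x) \notin \{0,1,x\}$ for all $x \in U$. Then $y$ solves the sixth Painlevé equation $\mathrm{PVI}_{\alpha,\beta,\gamma,\delta}$ on $U$ with $\alpha = \tfrac12(\theta_\infty-1)^2$, $\beta = -\tfrac12\theta_0^2$, $\gamma = \tfrac12\theta_1^2$, $\delta = \tfrac12 - \tfrac12\theta_x^2$. -/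
/-- The right-hand side of the Riccati equation satisfied by Hitchin's `y`. -/
noncomputable def Fr (θx θ1 θinf : ℂ) (z Y : ℂ) : ℂ :=
  (1/(θinf-1)) * ((1+θx) -
    ((1 - 2*z - ((2-θinf-θ1) - (4-θinf+θx)*z)) * (θ1+θinf-1 + z*(1+θx) - (θinf-1)*Y)
      + (2-θinf)*(1+θx)*(z*(1-z))
      - (θ1+θinf-1 + z*(1+θx) - (θinf-1)*Y)^2) / (z*(1-z)))

set_option maxHeartbeats 4000000 in
set_option maxRecDepth 4000 in
lemma pvi_core (e a K x Y P D : ℂ) (he : e ≠ 0) (hx0 : x ≠ 0) (hx1 : x - 1 ≠ 0)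
    (hY0 : Y ≠ 0) (hY1 : Y - 1 ≠ 0) (hYx : Y - x ≠ 0)
    (hP : e * (x*(1-x)) * P
      = a*(x*(1-x)) - ((K+(a-e)*x)*(K+a*x-e*Y) + (1-e)*a*(x*(1-x)) - (K+a*x-e*Y)^2))
    (hD : e * (x*(1-x))^2 * D
      = -((((a-e)*(K+a*x-e*Y) + (K+(a-e)*x)*(a-e*P) + (1-e)*a*(1-2*x)
            - 2*(K+a*x-e*Y)*(a-e*P)) * (x*(1-x))
          - ((K+(a-e)*x)*(K+a*x-e*Y) + (1-e)*a*(x*(1-x)) - (K+a*x-e*Y)^2)*(1-2*x)))) :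
    D = (1/2)*(1/Y + 1/(Y-1) + 1/(Y-x))*P^2 - (1/x + 1/(x-1) + 1/(Y-x))*P
      + Y*(Y-1)*(Y-x)/(x^2*(x-1)^2) *
        ((1/2)*e^2 + (-(1/2)*(a+K)^2)*x/Y^2 + ((1/2)*(K-e)^2)*(x-1)/(Y-1)^2
          + ((1/2)-(1/2)*(a-1)^2)*(x*(x-1))/(Y-x)^2) := by
  have hW : (2*e^2*x^2*(x-1)^2*Y*(Y-1)*(Y-x)) ≠ 0 := by
    simp [he, hx0, hx1, hY0, hY1, hYx, sub_ne_zero, pow_eq_zero_iff, mul_eq_zero]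
  apply mul_left_cancel₀ hW
  have e1 : 2*e^2*x^2*(x-1)^2*Y*(Y-1)*(Y-x) * ((1/2)*(1/Y + 1/(Y-1) + 1/(Y-x))*P^2)
      = e^2*x^2*(x-1)^2*((Y-1)*(Y-x)+Y*(Y-x)+Y*(Y-1))*P^2 := by
    field_simp
  have e2 : 2*e^2*x^2*(x-1)^2*Y*(Y-1)*(Y-x) * ((1/x + 1/(x-1) + 1/(Y-x))*P)
      = 2*e^2*x*(x-1)*Y*(Y-1)*((x-1)*(Y-x)+x*(Y-x)+x*(x-1))*P := by
    field_simp
  have e3 : 2*e^2*x^2*(x-1)^2*Y*(Y-1)*(Y-x) * (Y*(Y-1)*(Y-x)/(x^2*(x-1)^2) * ((1/2)*e^2))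
      = e^4*Y^2*(Y-1)^2*(Y-x)^2 := by
    field_simp
  have e4 : 2*e^2*x^2*(x-1)^2*Y*(Y-1)*(Y-x) *
        (Y*(Y-1)*(Y-x)/(x^2*(x-1)^2) * ((-(1/2)*(a+K)^2)*x/Y^2))
      = -(e^2*(a+K)^2*x*(Y-1)^2*(Y-x)^2) := by
    field_simp
  have e5 : 2*e^2*x^2*(x-1)^2*Y*(Y-1)*(Y-x) *
        (Y*(Y-1)*(Y-x)/(x^2*(x-1)^2) * (((1/2)*(K-e)^2)*(x-1)/(Y-1)^2))
      = e^2*(K-e)^2*(x-1)*Y^2*(Y-x)^2 := by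
    field_simp
  have e6 : 2*e^2*x^2*(x-1)^2*Y*(Y-1)*(Y-x) *
        (Y*(Y-1)*(Y-x)/(x^2*(x-1)^2) * (((1/2)-(1/2)*(a-1)^2)*(x*(x-1))/(Y-x)^2))
      = e^2*(1-(a-1)^2)*x*(x-1)*Y^2*(Y-1)^2 := by
    field_simp
  have hsplit : 2*e^2*x^2*(x-1)^2*Y*(Y-1)*(Y-x) *
      ((1/2)*(1/Y + 1/(Y-1) + 1/(Y-x))*P^2 - (1/x + 1/(x-1) + 1/(Y-x))*P
      + Y*(Y-1)*(Y-x)/(x^2*(x-1)^2) *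
        ((1/2)*e^2 + (-(1/2)*(a+K)^2)*x/Y^2 + ((1/2)*(K-e)^2)*(x-1)/(Y-1)^2
          + ((1/2)-(1/2)*(a-1)^2)*(x*(x-1))/(Y-x)^2))
      = 2*e^2*x^2*(x-1)^2*Y*(Y-1)*(Y-x) * ((1/2)*(1/Y + 1/(Y-1) + 1/(Y-x))*P^2)
        - 2*e^2*x^2*(x-1)^2*Y*(Y-1)*(Y-x) * ((1/x + 1/(x-1) + 1/(Y-x))*P)
        + (2*e^2*x^2*(x-1)^2*Y*(Y-1)*(Y-x) * (Y*(Y-1)*(Y-x)/(x^2*(x-1)^2) * ((1/2)*e^2))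
          + 2*e^2*x^2*(x-1)^2*Y*(Y-1)*(Y-x) *
            (Y*(Y-1)*(Y-x)/(x^2*(x-1)^2) * ((-(1/2)*(a+K)^2)*x/Y^2))
          + 2*e^2*x^2*(x-1)^2*Y*(Y-1)*(Y-x) *
            (Y*(Y-1)*(Y-x)/(x^2*(x-1)^2) * (((1/2)*(K-e)^2)*(x-1)/(Y-1)^2))
          + 2*e^2*x^2*(x-1)^2*Y*(Y-1)*(Y-x) *
            (Y*(Y-1)*(Y-x)/(x^2*(x-1)^2) * (((1/2)-(1/2)*(a-1)^2)*(x*(x-1))/(Y-x)^2))) := by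
    ring
  rw [hsplit, e1, e2, e3, e4, e5, e6]
  linear_combination (2*e*Y*(Y-1)*(Y-x)) * hD
    - (((-2)*e*x*Y + 3*e*x*Y^2 + e*x^2 + (-3)*e*x^2*Y^2 + (-1)*e*x^3 + 2*e*x^3*Y) * P
      + (2*e*Y^2 + (-2)*e*Y^3 + (-4)*e*x*Y^2 + 4*e*x*Y^3 + 2*e*x^2*Y + (-2)*e*x^2*Y^2
        + (-1)*e*K*Y^3 + (-1)*e*K*x*Y + 3*e*K*x*Y^2 + e*K*x^2 + (-2)*e*K*x^2*Y
        + (-2)*e*a*x*Y + 3*e*a*x*Y^2 + (-1)*e*a*x*Y^3 + e*a*x^2 + (-1)*e*a*x^2*Y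
        + 2*e^2*Y^3 + (-1)*e^2*Y^4 + (-3)*e^2*x*Y^2 + e^2*x*Y^3 + e^2*x^2*Y)) * hP


set_option maxHeartbeats 4000000 in
/-- Hitchin's family: Riccati/hypergeometric solutions of Painlevé VI
corresponding to reducible monodromy, `θ₀ + θₓ + θ₁ + θ∞ = 0`. -/
theorem pvi_hypergeometric_solutions (θ0 θx θ1 θinf : ℂ)
    (hsum : θ0 + θx + θ1 + θinf = 0) (hinf : θinf ≠ 1)
    (U : Set ℂ) (hU : IsOpen U) (hU01 : ∀ x ∈ U, x ≠ 0 ∧ x ≠ 1)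
    (u : ℂ → ℂ) (hu : DifferentiableOn ℂ u U) (hune : ∀ x ∈ U, u x ≠ 0)
    (hhyp : ∀ x ∈ U,
      x * (1 - x) * deriv (deriv u) x
        + ((2 - θinf - θ1) - (4 - θinf + θx) * x) * deriv u x
        - (2 - θinf) * (1 + θx) * u x = 0)
    (y : ℂ → ℂ)
    (hy : ∀ x, y x = (θ1 + θinf - 1 + x * (1 + θx)) / (θinf - 1)
        - (1 / (θinf - 1)) * (x * (1 - x) / u x) * deriv u x)
    (hval : ∀ x ∈ U, y x ≠ 0 ∧ y x ≠ 1 ∧ y x ≠ x) :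
    ∀ x ∈ U,
      SatisfiesPVI ((1/2) * (θinf - 1)^2) (-(1/2) * θ0^2)
        ((1/2) * θ1^2) ((1/2 : ℂ) - (1/2) * θx^2) y x := by
  have he : θinf - 1 ≠ 0 := sub_ne_zero.mpr hinf
  have hA : AnalyticOnNhd ℂ u U := hu.analyticOnNhd hU
  have hA1 : AnalyticOnNhd ℂ (deriv u) U := hA.deriv
  have hyf : y = fun t => (θ1 + θinf - 1 + t * (1 + θx)) / (θinf - 1)
      - (1 / (θinf - 1)) * (t * (1 - t) / u t) * deriv u t := funext hy
  -- Step A: the Riccati equation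
  have key : ∀ z ∈ U, HasDerivAt y (Fr θx θ1 θinf z (y z)) z := by
    intro z hz
    obtain ⟨hz0, hz1⟩ := hU01 z hz
    have hz1' : (1 : ℂ) - z ≠ 0 := sub_ne_zero.mpr (Ne.symm hz1)
    have hu0 : u z ≠ 0 := hune z hz
    have hud : HasDerivAt u (deriv u z) z := (hA z hz).differentiableAt.hasDerivAt
    have hud2 : HasDerivAt (deriv u) (deriv (deriv u) z) z :=
      (hA1 z hz).differentiableAt.hasDerivAt
    have hb : HasDerivAt (fun t : ℂ => t * (1 - t)) (1 - 2*z) z := by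
      have := (hasDerivAt_id z).mul ((hasDerivAt_const z (1:ℂ)).sub (hasDerivAt_id z))
      refine this.congr_deriv ?_ <;> try simp only [id_eq, Pi.sub_apply]
      all_goals ring
    have h2 : HasDerivAt (fun t => t * (1 - t) / u t)
        (((1 - 2*z) * u z - z * (1 - z) * deriv u z) / u z ^ 2) z := hb.div hud hu0
    have h3 := (h2.const_mul (1 / (θinf - 1))).mul hud2
    have h4 : HasDerivAt (fun t : ℂ => (θ1 + θinf - 1 + t * (1 + θx)) / (θinf - 1))
        ((1 + θx) / (θinf - 1)) z := by
      have := (((hasDerivAt_id z).mul_const (1 + θx)).const_add (θ1 + θinf - 1)).div_const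
        (θinf - 1)
      refine this.congr_deriv ?_ <;> try simp only [id_eq, Pi.sub_apply]
      all_goals ring
    have h5 := h4.sub h3
    rw [hyf]
    refine h5.congr_deriv ?_
    have hw : deriv (deriv u) z
        = ((2 - θinf) * (1 + θx) * u z
            - ((2 - θinf - θ1) - (4 - θinf + θx) * z) * deriv u z) / (z * (1 - z)) := by
      field_simp
      linear_combination hhyp z hz
    simp only [Fr]
    beta_reduce
    rw [hw]
    have hQe : θ1 + θinf - 1 + z * (1 + θx) -
        (θinf - 1) * ((θ1 + θinf - 1 + z * (1 + θx)) / (θinf - 1)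
          - 1 / (θinf - 1) * (z * (1 - z) / u z) * deriv u z)
        = z * (1 - z) * deriv u z / u z := by
      field_simp
      ring
    rw [hQe]
    field_simp
    ring
  intro x hx
  obtain ⟨hx0, hx1⟩ := hU01 x hx
  have hx1' : (1 : ℂ) - x ≠ 0 := sub_ne_zero.mpr (Ne.symm hx1)
  have hx1'' : x - 1 ≠ 0 := sub_ne_zero.mpr hx1
  have hb0 : x * (1 - x) ≠ 0 := mul_ne_zero hx0 hx1'
  obtain ⟨hY0, hY1, hYx⟩ := hval x hx
  have hY1' : y x - 1 ≠ 0 := sub_ne_zero.mpr hY1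
  have hYx' : y x - x ≠ 0 := sub_ne_zero.mpr hYx
  have hYd : HasDerivAt y (Fr θx θ1 θinf x (y x)) x := key x hx
  -- Step B: second derivative
  have hev : deriv y =ᶠ[nhds x] fun z => Fr θx θ1 θinf z (y z) := by
    filter_upwards [hU.mem_nhds hx] with z hz using (key z hz).deriv
  have hdd : deriv (deriv y) x = deriv (fun z => Fr θx θ1 θinf z (y z)) x := hev.deriv_eq
  -- explicit derivative of z ↦ Fr θx θ1 θinf z (y z)
  have hQ : HasDerivAt (fun z => θ1 + θinf - 1 + z * (1 + θx) - (θinf - 1) * y z)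
      ((1 + θx) - (θinf - 1) * Fr θx θ1 θinf x (y x)) x := by
    have := (((hasDerivAt_id x).mul_const (1 + θx)).const_add (θ1 + θinf - 1)).sub
      (hYd.const_mul (θinf - 1))
    refine this.congr_deriv ?_ <;> try simp only [id_eq, Pi.sub_apply]
    all_goals ring
  have hL : HasDerivAt (fun z : ℂ => 1 - 2*z - ((2 - θinf - θ1) - (4 - θinf + θx) * z))
      (-2 + (4 - θinf + θx)) x := by
    have := (((hasDerivAt_id x).const_mul 2).const_sub 1).sub
      (((hasDerivAt_id x).const_mul (4 - θinf + θx)).const_sub (2 - θinf - θ1))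
    refine this.congr_deriv ?_ <;> try simp only [id_eq, Pi.sub_apply]
    all_goals ring
  have hbx : HasDerivAt (fun z : ℂ => z * (1 - z)) (1 - 2*x) x := by
    have := (hasDerivAt_id x).mul ((hasDerivAt_const x (1:ℂ)).sub (hasDerivAt_id x))
    refine this.congr_deriv ?_ <;> try simp only [id_eq, Pi.sub_apply]
    all_goals ring
  have hN := ((hL.mul hQ).add (hbx.const_mul ((2 - θinf) * (1 + θx)))).sub (hQ.pow 2)
  have hFrac := hN.div hbx hb0
  have hG := (hFrac.const_sub (1 + θx)).const_mul (1 / (θinf - 1))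
  have hG' : HasDerivAt (fun z => Fr θx θ1 θinf z (y z))
      ((1 / (θinf - 1)) * -((((-2 + (4 - θinf + θx)) *
          (θ1 + θinf - 1 + x * (1 + θx) - (θinf - 1) * y x)
        + (1 - 2*x - ((2 - θinf - θ1) - (4 - θinf + θx) * x)) *
          ((1 + θx) - (θinf - 1) * Fr θx θ1 θinf x (y x))
        + (2 - θinf) * (1 + θx) * (1 - 2*x)
        - (2 : ℕ) * (θ1 + θinf - 1 + x * (1 + θx) - (θinf - 1) * y x) ^ 1 *
          ((1 + θx) - (θinf - 1) * Fr θx θ1 θinf x (y x))) * (x * (1 - x))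
        - ((1 - 2*x - ((2 - θinf - θ1) - (4 - θinf + θx) * x)) *
            (θ1 + θinf - 1 + x * (1 + θx) - (θinf - 1) * y x)
          + (2 - θinf) * (1 + θx) * (x * (1 - x))
          - (θ1 + θinf - 1 + x * (1 + θx) - (θinf - 1) * y x) ^ 2) * (1 - 2*x))
        / (x * (1 - x)) ^ 2)) x := hG
  have hθ0 : θ0 = -(θx + θ1 + θinf) := by linear_combination hsum
  have hPfact : (θinf-1) * (x*(1-x)) * Fr θx θ1 θinf x (y x)
      = (1+θx)*(x*(1-x)) - (((θ1+θinf-1)+((1+θx)-(θinf-1))*x)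
          * ((θ1+θinf-1)+(1+θx)*x-(θinf-1)*(y x))
        + (1-(θinf-1))*(1+θx)*(x*(1-x))
        - ((θ1+θinf-1)+(1+θx)*x-(θinf-1)*(y x))^2) := by
    simp only [Fr]
    rw [← sub_eq_zero]
    field_simp
    ring
  have hDfact : (θinf-1) * (x*(1-x))^2 * deriv (deriv y) x
      = -(((((1+θx)-(θinf-1))*((θ1+θinf-1)+(1+θx)*x-(θinf-1)*(y x))
          + ((θ1+θinf-1)+((1+θx)-(θinf-1))*x)*((1+θx)-(θinf-1)*Fr θx θ1 θinf x (y x))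
          + (1-(θinf-1))*(1+θx)*(1-2*x)
          - 2*((θ1+θinf-1)+(1+θx)*x-(θinf-1)*(y x))*((1+θx)-(θinf-1)*Fr θx θ1 θinf x (y x)))
            * (x*(1-x))
        - (((θ1+θinf-1)+((1+θx)-(θinf-1))*x)*((θ1+θinf-1)+(1+θx)*x-(θinf-1)*(y x))
          + (1-(θinf-1))*(1+θx)*(x*(1-x))
          - ((θ1+θinf-1)+(1+θx)*x-(θinf-1)*(y x))^2)*(1-2*x))) := by
    rw [hdd, hG'.deriv]
    rw [← sub_eq_zero]
    field_simp
    ring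
  have hcore := pvi_core (θinf-1) (1+θx) (θ1+θinf-1) x (y x)
    (Fr θx θ1 θinf x (y x)) (deriv (deriv y) x)
    he hx0 hx1'' hY0 hY1' hYx' hPfact hDfact
  rw [SatisfiesPVI, hcore, hYd.deriv, hθ0]
  ring
end

section
/- Let $\theta_0,\theta_x,\theta_1,\theta_\infty \in \mathbb{C}$ and set $p_\mu = 2\cos\pi\theta_\mu$ for $\mu \in \{0,x,1,\infty\}$. Suppose $p_{0x} = 2\cos\pi(\theta_\infty + \theta_1)$. Then for all $p_{01}, p_{x1} \in \mathbb{C}$, the Jimbo–Fricke cubic expression $p_{0x}^2+p_{01}^2+p_{x1}^2+p_{0x}p_{01}p_{x1}-(p_0p_x+p_1p_\infty)p_{0x}-(p_0p_1+p_xp_\infty)p_{01}-(p_xp_1+p_0p_\infty)p_{x1}+p_0^2+p_1^2+p_x^2+p_\infty^2+p_0p_xp_1p_\infty-4$ factors as $\big[p_{01}+p_{x1}e^{i\pi(\theta_\infty+\theta_1)}-2(e^{i\pi\theta_1}\cos\pi\theta_0+e^{i\pi\theta_\infty}\cos\pi\theta_x)\big]\cdot\big[p_{01}+p_{x1}e^{-i\pi(\theta_\infty+\theta_1)}-2(e^{-i\pi\theta_1}\cos\pi\theta_0+e^{-i\pi\theta_\infty}\cos\pi\theta_x)\big]$.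 -/
open Complex

/-- Factorization of the Jimbo–Fricke cubic when `p₀ₓ = 2 cos π(θ∞ + θ₁)`. -/
theorem jimbo_fricke_factorization_add (θ0 θx θ1 θinf : ℂ)
    (p0 px p1 pinf : ℂ)
    (hp0 : p0 = 2 * Complex.cos ((Real.pi : ℂ) * θ0))
    (hpx : px = 2 * Complex.cos ((Real.pi : ℂ) * θx))
    (hp1 : p1 = 2 * Complex.cos ((Real.pi : ℂ) * θ1))
    (hpinf : pinf = 2 * Complex.cos ((Real.pi : ℂ) * θinf))
    (p0x : ℂ) (hp0x : p0x = 2 * Complex.cos ((Real.pi : ℂ) * (θinf + θ1))) :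
    ∀ p01 px1 : ℂ,
      p0x ^ 2 + p01 ^ 2 + px1 ^ 2 + p0x * p01 * px1
        - (p0 * px + p1 * pinf) * p0x - (p0 * p1 + px * pinf) * p01
        - (px * p1 + p0 * pinf) * px1
        + p0 ^ 2 + p1 ^ 2 + px ^ 2 + pinf ^ 2 + p0 * px * p1 * pinf - 4
      = (p01 + px1 * Complex.exp (Complex.I * (Real.pi : ℂ) * (θinf + θ1))
            - 2 * (Complex.exp (Complex.I * (Real.pi : ℂ) * θ1)
                    * Complex.cos ((Real.pi : ℂ) * θ0)
                  + Complex.exp (Complex.I * (Real.pi : ℂ) * θinf)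
                    * Complex.cos ((Real.pi : ℂ) * θx)))
        * (p01 + px1 * Complex.exp (-Complex.I * (Real.pi : ℂ) * (θinf + θ1))
            - 2 * (Complex.exp (-Complex.I * (Real.pi : ℂ) * θ1)
                    * Complex.cos ((Real.pi : ℂ) * θ0)
                  + Complex.exp (-Complex.I * (Real.pi : ℂ) * θinf)
                    * Complex.cos ((Real.pi : ℂ) * θx))) := by
  intro p01 px1
  have key : ∀ z : ℂ, Complex.cos z
      = (Complex.exp (z * Complex.I) + Complex.exp (-(z * Complex.I))) / 2 := by
    intro z
    rw [Complex.cos, neg_mul]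
  rw [show Complex.I * (Real.pi : ℂ) * (θinf + θ1)
        = (Real.pi : ℂ) * θinf * Complex.I + (Real.pi : ℂ) * θ1 * Complex.I by ring,
      show -Complex.I * (Real.pi : ℂ) * (θinf + θ1)
        = -((Real.pi : ℂ) * θinf * Complex.I) + -((Real.pi : ℂ) * θ1 * Complex.I) by ring,
      show Complex.I * (Real.pi : ℂ) * θ1 = (Real.pi : ℂ) * θ1 * Complex.I by ring,
      show Complex.I * (Real.pi : ℂ) * θinf = (Real.pi : ℂ) * θinf * Complex.I by ring,
      show -Complex.I * (Real.pi : ℂ) * θ1 = -((Real.pi : ℂ) * θ1 * Complex.I) by ring,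
      show -Complex.I * (Real.pi : ℂ) * θinf = -((Real.pi : ℂ) * θinf * Complex.I) by ring,
      Complex.exp_add, Complex.exp_add]
  subst hp0 hpx hp1 hpinf hp0x
  rw [show (Real.pi : ℂ) * (θinf + θ1)
        = (Real.pi : ℂ) * θinf + (Real.pi : ℂ) * θ1 by ring]
  simp only [key, add_mul, Complex.exp_add, neg_add]
  set a := Complex.exp ((Real.pi : ℂ) * θ0 * Complex.I) with ha
  set ap := Complex.exp (-((Real.pi : ℂ) * θ0 * Complex.I)) with hap
  set b := Complex.exp ((Real.pi : ℂ) * θx * Complex.I) with hb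
  set bp := Complex.exp (-((Real.pi : ℂ) * θx * Complex.I)) with hbp
  set c := Complex.exp ((Real.pi : ℂ) * θ1 * Complex.I) with hc
  set cp := Complex.exp (-((Real.pi : ℂ) * θ1 * Complex.I)) with hcp
  set d := Complex.exp ((Real.pi : ℂ) * θinf * Complex.I) with hd
  set dp := Complex.exp (-((Real.pi : ℂ) * θinf * Complex.I)) with hdp
  have haa : a * ap = 1 := by rw [ha, hap, ← Complex.exp_add, add_neg_cancel, Complex.exp_zero]
  have hbb : b * bp = 1 := by rw [hb, hbp, ← Complex.exp_add, add_neg_cancel, Complex.exp_zero]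
  have hcc : c * cp = 1 := by rw [hc, hcp, ← Complex.exp_add, add_neg_cancel, Complex.exp_zero]
  have hdd : d * dp = 1 := by rw [hd, hdp, ← Complex.exp_add, add_neg_cancel, Complex.exp_zero]
  linear_combination (2 - 2*c*cp) * haa + (2 - 2*d*dp) * hbb
    + (-dp^2 - d*dp*px1^2 - d^2 + ap*dp*px1 + ap*d*px1 - ap^2 + a*dp*px1 + a*d*px1 - a^2) * hcc
    + (-px1^2 - cp^2 - c^2 + bp*cp*px1 + bp*c*px1 - bp^2 + b*cp*px1 + b*c*px1 - b^2) * hdd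
end
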